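/- Let T be a tree on k ≥ 4 vertices. For an edge e = xy of T let w(e) = min{deg_T(x), deg_T(y)}, and let w(T) = max over edges e of T of w(e). Then for every n ≥ k, ex_c(n,T) ≥ (w(T)−1)(n−w(T)+1). -/

import Mathlib

open SimpleGraph

/-- `G` contains a copy of `F`, i.e. a subgraph isomorphic to `F`
(given by an injective graph homomorphism). -/
def ContainsCopy {α β : Type*} (F : SimpleGraph α) (G : SimpleGraph β) : Prop :=
  ∃ f : α ↪ β, ∀ ⦃a b : α⦄, F.Adj a b → G.Adj (f a) (f b)

/-- The connected Turán number `ex_c(n, F)`: the maximum number of edges of a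
connected `F`-free simple graph on `n` vertices. -/
noncomputable def exConn {α : Type*} (n : ℕ) (F : SimpleGraph α) : ℕ :=
  sSup {m | ∃ G : SimpleGraph (Fin n), G.Connected ∧ ¬ ContainsCopy F G ∧ m = G.edgeSet.ncard}

/-- `w(G) = max_{e = xy ∈ E(G)} min{deg_G(x), deg_G(y)}`. -/
noncomputable def maxEdgeWeight {V : Type*} [Fintype V] (G : SimpleGraph V)
    [DecidableRel G.Adj] : ℕ :=
  sSup {m | ∃ x y, G.Adj x y ∧ m = min (G.degree x) (G.degree y)}

/-! Put `a = w(T) - 1`. The complete bipartite graph `K_{a, n-a}` is connected and has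
`a (n - a)` edges, and each of its edges has an endpoint of degree `a`. An edge `xy` of `T`
realising `w(T)` has both endpoints of degree at least `w(T) > a`; since degrees cannot drop
along an embedding, `T` does not embed in `K_{a, n-a}`. Both parts are nonempty when `w(T) ≥ 2`,
as `w(T) ≤ deg x < k ≤ n`. -/

namespace SimpleGraph

variable {α β : Type*}

instance : DecidableRel (completeBipartiteGraph α β).Adj := fun v w ↦
  inferInstanceAs (Decidable (v.isLeft ∧ w.isRight ∨ v.isRight ∧ w.isLeft))

theorem degree_inr_completeBipartiteGraph [Fintype α] [Fintype β] (w : β) :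
    (completeBipartiteGraph α β).degree (.inr w) = Fintype.card α := by
  have : (completeBipartiteGraph α β).neighborFinset (.inr w) = Finset.univ.map .inl := by
    ext (v | v) <;> simp
  rw [← card_neighborFinset_eq_degree, this, Finset.card_map, Finset.card_univ]

theorem ncard_edgeSet_completeBipartiteGraph [Finite α] [Finite β] :
    (completeBipartiteGraph α β).edgeSet.ncard = Nat.card α * Nat.card β := by
  simp [Set.ncard_def, encard_edgeSet_completeBipartiteGraph, ENat.card_eq_coe_natCard]

theorem completeBipartiteGraph_connected [Nonempty α] [Nonempty β] :
    (completeBipartiteGraph α β).Connected := by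
  obtain ⟨a⟩ := ‹Nonempty α›
  obtain ⟨b⟩ := ‹Nonempty β›
  have hreach : ∀ v, (completeBipartiteGraph α β).Reachable (.inl a) v := by
    have hb : (completeBipartiteGraph α β).Reachable (.inl a) (.inr b) := Adj.reachable (by simp)
    rintro (a' | b')
    · exact hb.trans (Adj.reachable (by simp))
    · exact Adj.reachable (by simp)
  exact ⟨fun v w ↦ (hreach v).symm.trans (hreach w)⟩

end SimpleGraph

theorem containsCopy_iff_isContained {α β : Type*} {F : SimpleGraph α} {G : SimpleGraph β} :
    ContainsCopy F G ↔ F ⊑ G :=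
  ⟨fun ⟨f, hf⟩ ↦ ⟨⟨⟨f, fun h ↦ hf h⟩, f.injective⟩⟩,
    fun ⟨f⟩ ↦ ⟨⟨f, f.injective⟩, fun _ _ h ↦ f.toHom.map_adj h⟩⟩

theorem ncard_edgeSet_le_exConn {α W : Type*} [Fintype W] {F : SimpleGraph α}
    {G : SimpleGraph W} (hG : G.Connected) (hF : ¬ F ⊑ G) :
    G.edgeSet.ncard ≤ exConn (Fintype.card W) F := by
  let e := Iso.map (Fintype.equivFin W) G
  have hbdd : BddAbove {m | ∃ G : SimpleGraph (Fin (Fintype.card W)), G.Connected ∧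
      ¬ ContainsCopy F G ∧ m = G.edgeSet.ncard} :=
    (Set.finite_range fun G : SimpleGraph (Fin _) ↦ G.edgeSet.ncard).subset
      (by rintro _ ⟨G, -, -, rfl⟩; exact ⟨G, rfl⟩) |>.bddAbove
  refine le_csSup hbdd ⟨_, e.connected_iff.mp hG, ?_, ?_⟩
  · rw [containsCopy_iff_isContained, ← isContained_congr_right e]
    exact hF
  · exact Nat.card_congr e.mapEdgeSet

theorem exists_adj_maxEdgeWeight_le_degree {V : Type*} [Fintype V] (T : SimpleGraph V)
    [DecidableRel T.Adj] (h : maxEdgeWeight T ≠ 0) :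
    ∃ x y, T.Adj x y ∧ maxEdgeWeight T ≤ T.degree x ∧ maxEdgeWeight T ≤ T.degree y := by
  let S := {m | ∃ x y, T.Adj x y ∧ m = min (T.degree x) (T.degree y)}
  have hS : maxEdgeWeight T = sSup S := rfl
  have hne : S.Nonempty := Set.nonempty_iff_ne_empty.mpr fun hS_empty ↦ h <| by
    rw [hS, hS_empty, csSup_empty]; rfl
  have hbdd : BddAbove S :=
    (Set.finite_range fun p : V × V ↦ min (T.degree p.1) (T.degree p.2)).subset
      (by rintro _ ⟨x, y, -, rfl⟩; exact ⟨(x, y), rfl⟩) |>.bddAbove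
  obtain ⟨x, y, hxy, hw⟩ := Nat.sSup_mem hne hbdd
  rw [hS, hw]
  exact ⟨x, y, hxy, min_le_left _ _, min_le_right _ _⟩

theorem not_isContained_completeBipartiteGraph {α β V : Type*} [Fintype α] [Fintype β]
    {F : SimpleGraph V} [F.LocallyFinite] {x y : V} (hxy : F.Adj x y)
    (hx : Fintype.card α < F.degree x) (hy : Fintype.card α < F.degree y) :
    ¬ F ⊑ completeBipartiteGraph α β := by
  rintro ⟨f⟩
  have hdeg (v : V) (hv : (f v).isRight) : F.degree v ≤ Fintype.card α := by
    obtain ⟨w, hw⟩ := Sum.isRight_iff.mp hv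
    have h := f.degree_le v
    rwa [hw, degree_inr_completeBipartiteGraph] at h
  rcases f.toHom.map_adj hxy with ⟨-, hfy⟩ | ⟨hfx, -⟩
  · exact (hdeg y hfy).not_gt hy
  · exact (hdeg x hfx).not_gt hx

theorem mul_le_exConn_add {V : Type*} {F : SimpleGraph V} [F.LocallyFinite] {x y : V}
    (hxy : F.Adj x y) {a b : ℕ} (hx : a < F.degree x) (hy : a < F.degree y)
    (ha : 0 < a) (hb : 0 < b) : a * b ≤ exConn (a + b) F := by
  have : Nonempty (Fin a) := ⟨⟨0, ha⟩⟩
  have : Nonempty (Fin b) := ⟨⟨0, hb⟩⟩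
  simpa [ncard_edgeSet_completeBipartiteGraph] using
    ncard_edgeSet_le_exConn completeBipartiteGraph_connected
      (not_isContained_completeBipartiteGraph (α := Fin a) (β := Fin b) hxy
        (by simpa using hx) (by simpa using hy))

theorem exConn_ge_of_maxEdgeWeight_general {V : Type*} [Fintype V] (T : SimpleGraph V)
    [DecidableRel T.Adj] (k : ℕ) (hcard : Fintype.card V = k)
    (n : ℕ) (hn : k ≤ n) :
    (maxEdgeWeight T - 1) * (n - maxEdgeWeight T + 1) ≤ exConn n T := by
  set w := maxEdgeWeight T
  rcases Nat.lt_or_ge w 2 with hw | hw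
  · simp [Nat.sub_eq_zero_of_le (Nat.le_of_lt_succ hw)]
  obtain ⟨x, y, hxy, hx, hy⟩ := exists_adj_maxEdgeWeight_le_degree T (by omega)
  have hwn : w < n := calc
    w ≤ T.degree x := hx
    _ < k := hcard ▸ T.degree_lt_card_verts x
    _ ≤ n := hn
  have h := mul_le_exConn_add (a := w - 1) (b := n - w + 1) hxy
    (by omega) (by omega) (by omega) (by omega)
  rwa [show w - 1 + (n - w + 1) = n by omega] at h

/-- Proposition (edge weight construction): for a tree `T` on `k ≥ 4` vertices and
`n ≥ k`, `ex_c(n,T) ≥ (w(T)-1)(n-w(T)+1)`. -/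
theorem exConn_ge_of_maxEdgeWeight {V : Type*} [Fintype V] (T : SimpleGraph V)
    [DecidableRel T.Adj] (k : ℕ) (hk : 4 ≤ k) (hcard : Fintype.card V = k) (hT : T.IsTree)
    (n : ℕ) (hn : k ≤ n) :
    (maxEdgeWeight T - 1) * (n - maxEdgeWeight T + 1) ≤ exConn n T :=
  exConn_ge_of_maxEdgeWeight_general T k hcard n hn
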